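/- arXiv:1805.09217 — 6 statements merged into one kernel-verified Lean document; each statement's English description precedes it below -/
import Mathlib

section
/- Let X and Y be measurable spaces, let ε, δ ∈ (0,1), let k ≥ 1 and t ≥ 0 be integers, let D_1, ..., D_k be probability measures on X × Y, and let g : X → Y be a function whose disagreement set {(x,y) : g(x) ≠ y} is measurable. Set n = ⌈(432/ε)·ln(4k(t+1)²/δ)⌉, and for each player i draw n i.i.d. samples from D_i, i.e., consider the product measure μ = ⊗_{i=1}^k D_i^{⊗n} on ∏_{i=1}^k (X × Y)^n. Then with μ-probability at least 1 − δ/(4(t+1)²), the following holds simultaneously for every i ∈ {1,...,k}: (1) if err_{D_i}(g) ≤ ε/12, then the empirical error of g on the i-th sample tuple T_i is at most ε/6; and (2) if err_{D_i}(g) > ε/4, then the empirical error of g on T_i is strictly greater than ε/6. Consequently, the set {i : err_{T_i}(g) ≤ ε/6} returned by the Test procedure contains every i with err_{D_i}(g) ≤ ε/12 and none of the i with err_{D_i}(g) > ε/4. -/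
/-!
For a single player with true error `p = err_D(g)`, the number of misclassified samples is a sum
of `n` independent Bernoulli(`p`) variables, whose moment generating function is at most
`exp (n p (eˢ - 1))`. The Chernoff bound with `s = log 2` (if `p ≤ ε/12`) or `s = -log 2`
(if `p > ε/4`) puts the empirical error on the wrong side of `ε/6` with probability at most
`exp (-n ε / 108)`, and `n ε ≥ 432 log (4k(t+1)²/δ)` makes this at most `δ / (4k(t+1)²)`. A union bound over the
`k` players concludes.
-/

open MeasureTheory ProbabilityTheory Real Finset

lemma card_filter_mem_eq_sum_indicator {Ω : Type*} {A : Set Ω} [DecidablePred (· ∈ A)] {n : ℕ}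
    (τ : Fin n → Ω) : (#{j | τ j ∈ A} : ℝ) = ∑ j, A.indicator 1 (τ j) := by
  simp [Set.indicator_apply]

section BernoulliChernoff

variable {Ω : Type*} [MeasurableSpace Ω] {ν : Measure Ω} [IsProbabilityMeasure ν] {A : Set Ω}

lemma mgf_indicator_one (hA : MeasurableSet A) (t : ℝ) :
    mgf (A.indicator 1) ν t = 1 + ν.real A * (exp t - 1) := by
  have : (fun x => exp (t * A.indicator 1 x))
      = fun x => 1 + A.indicator (fun _ => exp t - 1) x := by
    ext x; by_cases hx : x ∈ A <;> simp [hx]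
  rw [mgf, this, integral_add (integrable_const _) ((integrable_const _).indicator hA),
    integral_indicator_const _ hA]
  simp [mul_comm]

lemma mgf_indicator_one_le (hA : MeasurableSet A) (t : ℝ) :
    mgf (A.indicator 1) ν t ≤ exp (ν.real A * (exp t - 1)) := by
  rw [mgf_indicator_one hA, add_comm]
  exact add_one_le_exp _

variable [DecidablePred (· ∈ A)] {n : ℕ}

omit [IsProbabilityMeasure ν] in
lemma measurable_card_filter_mem (hA : MeasurableSet A) :
    Measurable fun τ : Fin n → Ω => (#{j | τ j ∈ A} : ℝ) := by
  simp_rw [card_filter_mem_eq_sum_indicator]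
  exact Finset.measurable_sum _ fun j _ =>
    (measurable_const.indicator hA).comp (measurable_pi_apply j)

lemma integrable_exp_mul_card_filter_mem (hA : MeasurableSet A) (t : ℝ) :
    Integrable (fun τ : Fin n → Ω => exp (t * #{j | τ j ∈ A})) (Measure.pi fun _ => ν) := by
  refine .of_bound (measurable_const.mul (measurable_card_filter_mem hA)).exp.aestronglyMeasurable
    (exp (|t| * n)) (ae_of_all _ fun τ => ?_)
  rw [norm_of_nonneg (exp_pos _).le, exp_le_exp]
  have : (#{j | τ j ∈ A} : ℝ) ≤ n := by exact_mod_cast (card_filter_le _ _).trans_eq (by simp)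
  calc t * #{j | τ j ∈ A} ≤ |t| * #{j | τ j ∈ A} := by gcongr; exact le_abs_self t
    _ ≤ |t| * n := by gcongr

lemma mgf_card_filter_mem_pi_le (hA : MeasurableSet A) (t : ℝ) :
    mgf (fun τ : Fin n → Ω => (#{j | τ j ∈ A} : ℝ)) (Measure.pi fun _ => ν) t
      ≤ exp (n * ν.real A * (exp t - 1)) := by
  have hsum : (fun τ : Fin n → Ω => (#{j | τ j ∈ A} : ℝ))
      = ∑ j, fun τ : Fin n → Ω => A.indicator 1 (τ j) := by
    ext τ; rw [card_filter_mem_eq_sum_indicator, Finset.sum_apply]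
  have hmeas : Measurable (A.indicator (1 : Ω → ℝ)) := measurable_const.indicator hA
  rw [hsum, (iIndepFun_pi fun _ => hmeas.aemeasurable).mgf_sum
    fun j => hmeas.comp (measurable_pi_apply j)]
  calc ∏ j : Fin n, mgf (fun τ : Fin n → Ω => A.indicator 1 (τ j)) (Measure.pi fun _ => ν) t
      = ∏ _j : Fin n, mgf (A.indicator 1) ν t := by
        refine Finset.prod_congr rfl fun j _ => ?_
        exact mgf_congr_of_identDistrib _ _ ⟨(hmeas.comp (measurable_pi_apply j)).aemeasurable,
          hmeas.aemeasurable, by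
            rw [← Measure.map_map hmeas (measurable_pi_apply j),
              (measurePreserving_eval (fun _ => ν) j).map_eq]⟩ t
    _ ≤ ∏ _j : Fin n, exp (ν.real A * (exp t - 1)) :=
        Finset.prod_le_prod (fun _ _ => mgf_nonneg) fun _ _ => mgf_indicator_one_le hA t
    _ = exp (n * ν.real A * (exp t - 1)) := by
        rw [Finset.prod_const, Finset.card_univ, Fintype.card_fin, ← exp_nat_mul, mul_assoc]

lemma measureReal_le_card_filter_mem_le (hA : MeasurableSet A) {t : ℝ} (ht : 0 ≤ t) (a : ℝ) :
    (Measure.pi fun _ : Fin n => ν).real {τ | a ≤ #{j | τ j ∈ A}}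
      ≤ exp (-t * a + n * ν.real A * (exp t - 1)) := by
  rw [exp_add]
  exact (measure_ge_le_exp_mul_mgf a ht (integrable_exp_mul_card_filter_mem hA t)).trans
    (by gcongr; exact mgf_card_filter_mem_pi_le hA t)

lemma measureReal_card_filter_mem_le_le (hA : MeasurableSet A) {t : ℝ} (ht : t ≤ 0) (a : ℝ) :
    (Measure.pi fun _ : Fin n => ν).real {τ | #{j | τ j ∈ A} ≤ a}
      ≤ exp (-t * a + n * ν.real A * (exp t - 1)) := by
  rw [exp_add]
  exact (measure_le_le_exp_mul_mgf a ht (integrable_exp_mul_card_filter_mem hA t)).trans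
    (by gcongr; exact mgf_card_filter_mem_pi_le hA t)

end BernoulliChernoff

noncomputable def empiricalError {Ω : Type*} (A : Set Ω) [DecidablePred (· ∈ A)] {n : ℕ}
    (τ : Fin n → Ω) : ℝ :=
  #{j | τ j ∈ A} / n

/-- `p` is the true error and `e` the empirical error of the hypothesis; `Test` accepts iff
`e ≤ ε / 6`. -/
def TestIsCorrect (ε p e : ℝ) : Prop :=
  (p ≤ ε / 12 → e ≤ ε / 6) ∧ (ε / 4 < p → ε / 6 < e)

section Test

variable {Ω : Type*} [MeasurableSpace Ω] {ν : Measure Ω} [IsProbabilityMeasure ν] {A : Set Ω}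
  [DecidablePred (· ∈ A)] {n : ℕ}

lemma measureReal_lt_empiricalError_le (hA : MeasurableSet A) (hn : 0 < n) {ε : ℝ} (hε : 0 < ε)
    (hp : ν.real A ≤ ε / 12) :
    (Measure.pi fun _ : Fin n => ν).real {τ | ε / 6 < empiricalError A τ}
      ≤ exp (-(n * ε / 108)) := by
  have hn' : (0 : ℝ) < n := by exact_mod_cast hn
  have hsub : {τ : Fin n → Ω | ε / 6 < empiricalError A τ} ⊆ {τ | n * ε / 6 ≤ #{j | τ j ∈ A}} :=
    fun τ hτ => by
      simp only [empiricalError, Set.mem_ofPred_eq, lt_div_iff₀ hn'] at hτ ⊢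
      linarith
  refine (measureReal_mono hsub).trans <|
    (measureReal_le_card_filter_mem_le hA (log_nonneg one_le_two) _).trans (exp_le_exp.2 ?_)
  have hnp : n * ν.real A ≤ n * (ε / 12) := by gcongr
  rw [exp_log two_pos]
  nlinarith [log_two_gt_d9, mul_pos hn' hε]

lemma measureReal_empiricalError_le_le (hA : MeasurableSet A) (hn : 0 < n) {ε : ℝ} (hε : 0 < ε)
    (hp : ε / 4 < ν.real A) :
    (Measure.pi fun _ : Fin n => ν).real {τ | empiricalError A τ ≤ ε / 6}
      ≤ exp (-(n * ε / 108)) := by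
  have hn' : (0 : ℝ) < n := by exact_mod_cast hn
  have hsub : {τ : Fin n → Ω | empiricalError A τ ≤ ε / 6} ⊆ {τ | #{j | τ j ∈ A} ≤ n * ε / 6} :=
    fun τ hτ => by
      simp only [empiricalError, Set.mem_ofPred_eq, div_le_iff₀ hn'] at hτ ⊢
      linarith
  refine (measureReal_mono hsub).trans <|
    (measureReal_card_filter_mem_le_le hA (neg_nonpos.2 (log_nonneg one_le_two)) _).trans
      (exp_le_exp.2 ?_)
  have hnp : n * (ε / 4) ≤ n * ν.real A := by gcongr
  -- the tighter of the two tails: `1/8 - log 2 / 6 ≈ 0.0095 > 1/108`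
  rw [exp_neg, exp_log two_pos]
  nlinarith [log_two_lt_d9, mul_pos hn' hε]

lemma measureReal_not_testIsCorrect_le (hA : MeasurableSet A) (hn : 0 < n) {ε : ℝ} (hε : 0 < ε) :
    (Measure.pi fun _ : Fin n => ν).real {τ | ¬ TestIsCorrect ε (ν.real A) (empiricalError A τ)}
      ≤ exp (-(n * ε / 108)) := by
  by_cases hlow : ν.real A ≤ ε / 12
  · refine (measureReal_mono fun τ hτ => ?_).trans (measureReal_lt_empiricalError_le hA hn hε hlow)
    by_contra h
    exact hτ ⟨fun _ => not_lt.1 h, fun hhigh => by linarith⟩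
  by_cases hhigh : ε / 4 < ν.real A
  · refine (measureReal_mono fun τ hτ => ?_).trans (measureReal_empiricalError_le_le hA hn hε hhigh)
    by_contra h
    exact hτ ⟨fun h' => absurd h' hlow, fun _ => not_le.1 h⟩
  · have : {τ : Fin n → Ω | ¬ TestIsCorrect ε (ν.real A) (empiricalError A τ)} = ∅ :=
      Set.eq_empty_of_forall_notMem fun τ hτ => hτ ⟨fun h => absurd h hlow, fun h => absurd h hhigh⟩
    simp [this, (exp_pos _).le]

end Test

section UnionBound

variable {ι : Type*} [Fintype ι] {α : ι → Type*} [∀ i, MeasurableSpace (α i)]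
  (μ : ∀ i, Measure (α i)) [∀ i, IsProbabilityMeasure (μ i)]

lemma measure_pi_eval_preimage (i : ι) (B : Set (α i)) :
    Measure.pi μ (Function.eval i ⁻¹' B) = μ i B := by
  classical
  rw [Set.eval_preimage, Measure.pi_pi, Finset.prod_eq_single i]
  · simp
  · intro j _ hj
    simp [Function.update_of_ne hj]
  · simp

lemma one_sub_card_mul_le_measureReal_pi_forall (P : ∀ i, α i → Prop) {c : ℝ}
    (h : ∀ i, (μ i).real {x | ¬ P i x} ≤ c) :
    1 - Fintype.card ι * c ≤ (Measure.pi μ).real {ω | ∀ i, P i (ω i)} := by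
  set S := {ω : ∀ i, α i | ∀ i, P i (ω i)}
  have hcompl : Sᶜ = ⋃ i, Function.eval i ⁻¹' {x | ¬ P i x} := by
    ext ω
    simp [S]
  have hunion : (Measure.pi μ).real Sᶜ ≤ Fintype.card ι * c := by
    calc (Measure.pi μ).real Sᶜ ≤ ∑ i, (Measure.pi μ).real (Function.eval i ⁻¹' {x | ¬ P i x}) := by
          rw [hcompl]; exact measureReal_iUnion_fintype_le _
      _ = ∑ i, (μ i).real {x | ¬ P i x} := by
          simp only [measureReal_def, measure_pi_eval_preimage]
      _ ≤ Fintype.card ι * c := by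
          simpa using Finset.sum_le_sum fun i (_ : i ∈ univ) => h i
  have hsplit : 1 ≤ (Measure.pi μ).real S + (Measure.pi μ).real Sᶜ := by
    simpa using measureReal_union_le (μ := Measure.pi μ) S Sᶜ
  linarith

end UnionBound

open scoped Classical in
/-- Correctness of the `Test` procedure: drawing
`n = ⌈(432/ε)·ln(4k(t+1)²/δ)⌉` i.i.d. samples from each player's distribution,
with probability at least `1 - δ/(4(t+1)²)` the empirical error of `g`
on player `i`'s sample is at most `ε/6` whenever `err_{D_i}(g) ≤ ε/12`, and
strictly greater than `ε/6` whenever `err_{D_i}(g) > ε/4`, simultaneously for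
all players `i`. -/
theorem test_correct
    {X Y : Type*} [MeasurableSpace X] [MeasurableSpace Y]
    (ε δ : ℝ) (hε : ε ∈ Set.Ioo (0 : ℝ) 1) (hδ : δ ∈ Set.Ioo (0 : ℝ) 1)
    (k : ℕ) (hk : 1 ≤ k) (t : ℕ)
    (D : Fin k → Measure (X × Y)) [∀ i, IsProbabilityMeasure (D i)]
    (g : X → Y) (hg : MeasurableSet {p : X × Y | g p.1 ≠ p.2})
    (n : ℕ) (hn : n = ⌈(432 / ε) * Real.log (4 * k * (t + 1) ^ 2 / δ)⌉₊)
    (μ : Measure (Fin k → Fin n → X × Y))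
    (hμ : μ = Measure.pi (fun i : Fin k => Measure.pi (fun _ : Fin n => D i))) :
    ENNReal.ofReal (1 - δ / (4 * (t + 1) ^ 2)) ≤
      μ {ω | ∀ i : Fin k,
        ((D i {p : X × Y | g p.1 ≠ p.2}).toReal ≤ ε / 12 →
          ((Finset.univ.filter (fun j : Fin n => g (ω i j).1 ≠ (ω i j).2)).card : ℝ) / n
            ≤ ε / 6) ∧
        (ε / 4 < (D i {p : X × Y | g p.1 ≠ p.2}).toReal →
          ε / 6 <
            ((Finset.univ.filter (fun j : Fin n => g (ω i j).1 ≠ (ω i j).2)).card : ℝ) / n)} := by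
  obtain ⟨hε0, -⟩ := hε
  obtain ⟨hδ0, hδ1⟩ := hδ
  set M : ℝ := 4 * k * (t + 1) ^ 2 / δ with hM
  have hk' : (1 : ℝ) ≤ k := by exact_mod_cast hk
  have ht : (1 : ℝ) ≤ (t + 1) ^ 2 := one_le_pow₀ (by linarith [(t.cast_nonneg : (0 : ℝ) ≤ t)])
  have hlogM : 0 < log M := by
    refine log_pos ((one_lt_div hδ0).2 ?_)
    nlinarith
  have hn0 : 0 < n := hn ▸ Nat.ceil_pos.2 (by positivity)
  have hnε : 432 * log M ≤ n * ε :=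
    calc 432 * log M = (432 / ε * log M) * ε := by field_simp
      _ ≤ n * ε := by gcongr; exact hn ▸ Nat.le_ceil _
  have hfail : k * exp (-(n * ε / 108)) ≤ δ / (4 * (t + 1) ^ 2) :=
    calc k * exp (-(n * ε / 108)) ≤ k * exp (-log M) := by gcongr; linarith
      _ = δ / (4 * (t + 1) ^ 2) := by
        rw [exp_neg, exp_log (by positivity), hM]
        field_simp
  subst hμ
  have := one_sub_card_mul_le_measureReal_pi_forall _
    (fun i τ => TestIsCorrect ε ((D i).real _) (empiricalError _ τ))
    fun i => measureReal_not_testIsCorrect_le (ν := D i) hg hn0 hε0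
  rw [Fintype.card_fin] at this
  exact ENNReal.ofReal_le_of_le_toReal ((sub_le_sub_left hfail 1).trans this)
end

section
/- Let k ≥ 2 be an integer, ε ∈ (0,1), and T = ⌈10·ln k⌉. For each round t ∈ {0,...,T−1}, let e^{(t)} : {1,...,k} → [0,1] and let Z^{(t)} ⊆ {1,...,k} satisfy {i : e^{(t)}(i) ≤ ε/12} ⊆ Z^{(t)} ⊆ {i : e^{(t)}(i) ≤ ε/4}. Define weights by w(0,i) = 1, and w(t+1,i) = w(t,i) if i ∈ Z^{(t)} and w(t+1,i) = 2·w(t,i) otherwise. Assume that for every round t, the weighted average error is small: ∑_{i=1}^k (w(t,i)/∑_{j=1}^k w(t,j))·e^{(t)}(i) ≤ ε/120. Then for every player i ∈ {1,...,k}, the number of rounds t ∈ {0,...,T−1} with e^{(t)}(i) ≤ ε/4 is strictly greater than 0.7·T. -/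
open scoped Classical

/-- Deterministic core of the analysis of Algorithm BasicMW: with `T = ⌈10 ln k⌉`
rounds, successful tests `Z^{(t)}` and small weighted average error at every
round, every player has error at most `ε/4` in strictly more than 70% of the
rounds. -/
theorem basicMW_core
    (k : ℕ) (hk : 2 ≤ k) (ε : ℝ) (hε : ε ∈ Set.Ioo (0 : ℝ) 1)
    (T : ℕ) (hT : T = ⌈10 * Real.log k⌉₊)
    (e : ℕ → Fin k → ℝ) (he : ∀ t < T, ∀ i, e t i ∈ Set.Icc (0 : ℝ) 1)
    (Z : ℕ → Finset (Fin k))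
    (hZ₁ : ∀ t < T, ∀ i, e t i ≤ ε / 12 → i ∈ Z t)
    (hZ₂ : ∀ t < T, ∀ i ∈ Z t, e t i ≤ ε / 4)
    (w : ℕ → Fin k → ℝ)
    (hw0 : ∀ i, w 0 i = 1)
    (hwstep : ∀ t i, w (t + 1) i = if i ∈ Z t then w t i else 2 * w t i)
    (havg : ∀ t < T, ∑ i, (w t i / ∑ j, w t j) * e t i ≤ ε / 120) :
    ∀ i : Fin k,
      (0.7 : ℝ) * T < (((Finset.range T).filter (fun t => e t i ≤ ε / 4)).card : ℝ) := by
  intro i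
  obtain ⟨hε0, hε1⟩ := hε
  have hk0 : (0:ℝ) < k := by positivity
  have hk1 : (2:ℝ) ≤ (k:ℝ) := by exact_mod_cast hk
  have hlogk : Real.log 2 ≤ Real.log k := Real.log_le_log (by norm_num) hk1
  have hlog2 : (0.6931471803:ℝ) < Real.log 2 := Real.log_two_gt_d9
  have hT0 : 0 < T := by
    rw [hT]
    have : (0:ℝ) < 10 * Real.log k := by nlinarith
    exact Nat.ceil_pos.mpr this
  have hT0' : (0:ℝ) < T := by exact_mod_cast hT0
  have hTlog : Real.log k ≤ (T:ℝ) / 10 := by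
    have h := Nat.le_ceil (10 * Real.log k)
    rw [← hT] at h
    linarith
  -- weights are powers of two
  have hwpow : ∀ t j, w t j = 2 ^ (((Finset.range t).filter (fun s => j ∉ Z s)).card) := by
    intro t j
    induction t with
    | zero => simp [hw0]
    | succ t ih =>
      rw [hwstep, Finset.range_add_one, Finset.filter_insert]
      by_cases h : j ∈ Z t
      · simp [h, ih]
      · simp only [h, not_false_iff, if_neg, if_true, ih]
        rw [Finset.card_insert_of_notMem (by simp)]
        ring
  have hwpos : ∀ t j, (0:ℝ) < w t j := by
    intro t j; rw [hwpow]; positivity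
  have hWpos : ∀ t, (0:ℝ) < ∑ j, w t j :=
    fun t => Finset.sum_pos (fun j _ => hwpos t j) ⟨i, Finset.mem_univ i⟩
  -- one step bound
  have hstep : ∀ t < T, ∑ j, w (t+1) j ≤ (11/10) * ∑ j, w t j := by
    intro t ht
    have hWp := hWpos t
    have h1 : ∑ j, w t j * e t j ≤ ε/120 * ∑ j, w t j := by
      have h := havg t ht
      have hsum : ∑ j, (w t j / ∑ j', w t j') * e t j
          = (∑ j, w t j * e t j) / ∑ j', w t j' := by
        rw [Finset.sum_div]
        exact Finset.sum_congr rfl (fun j _ => by ring)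
      rw [hsum, div_le_iff₀ hWp] at h
      linarith [h]
    set S := ∑ j ∈ Finset.univ.filter (fun j => j ∉ Z t), w t j with hSdef
    have hS0 : 0 ≤ S := Finset.sum_nonneg (fun j _ => (hwpos t j).le)
    have hS1 : ε/12 * S ≤ ∑ j, w t j * e t j := by
      rw [hSdef, Finset.mul_sum]
      calc ∑ j ∈ Finset.univ.filter (fun j => j ∉ Z t), ε/12 * w t j
          ≤ ∑ j ∈ Finset.univ.filter (fun j => j ∉ Z t), w t j * e t j := by
            apply Finset.sum_le_sum
            intro j hj
            simp only [Finset.mem_filter] at hj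
            have hej : ε/12 < e t j := by
              by_contra hc
              exact hj.2 (hZ₁ t ht j (le_of_not_gt hc))
            nlinarith [hwpos t j]
        _ ≤ ∑ j, w t j * e t j := by
            apply Finset.sum_le_sum_of_subset_of_nonneg (Finset.filter_subset _ _)
            intro j _ _
            exact mul_nonneg (hwpos t j).le ((he t ht j).1)
    have hS2 : S ≤ (∑ j, w t j) / 10 := by
      have : ε/12 * S ≤ ε/120 * ∑ j, w t j := le_trans hS1 h1
      nlinarith
    have hsplit : ∑ j, w (t + 1) j = (∑ j, w t j) + S := by
      rw [hSdef, Finset.sum_filter, ← Finset.sum_add_distrib]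
      apply Finset.sum_congr rfl
      intro j _
      rw [hwstep]
      by_cases h : j ∈ Z t <;> simp [h] <;> ring
    linarith
  -- total weight bound
  have hWT : ∀ t, t ≤ T → ∑ j, w t j ≤ k * (11/10)^t := by
    intro t
    induction t with
    | zero => intro _; simp [hw0]
    | succ t ih =>
      intro ht
      have ht' : t < T := lt_of_lt_of_le (Nat.lt_succ_self t) ht
      calc ∑ j, w (t+1) j ≤ 11/10 * ∑ j, w t j := hstep t ht'
        _ ≤ 11/10 * ((k:ℝ) * (11/10)^t) := by
            have := ih ht'.le
            nlinarith
        _ = (k:ℝ) * (11/10)^(t+1) := by ring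
  set m := ((Finset.range T).filter (fun s => i ∉ Z s)).card with hm
  have h2m : (2:ℝ)^m ≤ (k:ℝ) * (11/10)^T := by
    calc (2:ℝ)^m = w T i := (hwpow T i).symm
      _ ≤ ∑ j, w T j := Finset.single_le_sum (fun j _ => (hwpos T j).le) (Finset.mem_univ i)
      _ ≤ (k:ℝ) * (11/10)^T := hWT T le_rfl
  have hlog : (m:ℝ) * Real.log 2 ≤ Real.log k + (T:ℝ) * Real.log (11/10) := by
    have h := Real.log_le_log (by positivity) h2m
    rw [Real.log_pow, Real.log_mul (ne_of_gt hk0) (by positivity), Real.log_pow] at h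
    exact_mod_cast h
  have hlog11 : Real.log (11/10) ≤ 1/10 := by
    have := Real.log_le_sub_one_of_pos (show (0:ℝ) < 11/10 by norm_num)
    linarith
  have hmlt : (m:ℝ) < 0.3 * T := by
    by_contra hc
    push_neg at hc
    have h1 : (m:ℝ) * Real.log 2 ≥ 0.3 * T * Real.log 2 := by
      apply mul_le_mul_of_nonneg_right hc (by linarith)
    nlinarith
  have hsub : (Finset.range T).filter (fun t => i ∈ Z t)
      ⊆ (Finset.range T).filter (fun t => e t i ≤ ε/4) := by
    intro t ht
    simp only [Finset.mem_filter, Finset.mem_range] at *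
    exact ⟨ht.1, hZ₂ t ht.1 i ht.2⟩
  have hcard : ((Finset.range T).filter (fun t => i ∈ Z t)).card + m = T := by
    rw [hm]
    simpa using Finset.card_filter_add_card_filter_not
      (s := Finset.range T) (p := fun t => i ∈ Z t)
  have hle := Finset.card_le_card hsub
  have hcardR : (((Finset.range T).filter (fun t => i ∈ Z t)).card : ℝ) + (m:ℝ) = (T:ℝ) := by
    exact_mod_cast hcard
  have hleR : (((Finset.range T).filter (fun t => i ∈ Z t)).card : ℝ)
      ≤ (((Finset.range T).filter (fun t => e t i ≤ ε/4)).card : ℝ) := by exact_mod_cast hle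
  linarith
end

section
/- Let (Ω, 𝓐, P) be a probability space, let k ≥ 1 be an integer, let w_1,...,w_k ≥ 0 be reals, let G ⊆ {1,...,k}, and let Z : Ω → 𝒫({1,...,k}) be a random subset such that for each i the event {ω : i ∈ Z(ω)} is measurable. Assume: (i) ∑_{i ∉ G} w_i ≤ (1/10)·∑_{i=1}^k w_i, and (ii) for every i ∈ G, P({ω : i ∉ Z(ω)}) ≤ 1/100. Then E[ ∑_{i=1}^k w_i + ∑_{i ∉ Z(ω)} w_i ] ≤ 1.11 · ∑_{i=1}^k w_i. -/
/-! By linearity of expectation the expected weight of the players missed by `Z` is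
`∑ᵢ P(i ∉ Z) wᵢ`. Players in `G` contribute at most `1/100` of the total weight, the others at
most their own weight, which is at most `1/10` of the total; so the expectation is at most
`(1 + 1/100 + 1/10) ∑ᵢ wᵢ`. -/

open MeasureTheory Finset

section

variable {Ω ι : Type*} [Fintype ι] {q : ι → Ω → Prop}
  [∀ i ω, Decidable (q i ω)]

lemma sum_filter_eq_sum_indicator_setOf (w : ι → ℝ) (ω : Ω) :
    ∑ i ∈ univ.filter (fun i => q i ω), w i = ∑ i, {ω | q i ω}.indicator (fun _ => w i) ω := by
  rw [sum_filter]
  exact sum_congr rfl fun i _ => by by_cases h : q i ω <;> simp [h]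

lemma integrable_sum_filter [MeasurableSpace Ω] (μ : Measure Ω) [IsFiniteMeasure μ]
    (hq : ∀ i, MeasurableSet {ω | q i ω}) (w : ι → ℝ) :
    Integrable (fun ω => ∑ i ∈ univ.filter (fun i => q i ω), w i) μ := by
  simp_rw [sum_filter_eq_sum_indicator_setOf]
  exact integrable_finsetSum _ fun i _ => (integrable_const (w i)).indicator (hq i)

lemma integral_sum_filter [MeasurableSpace Ω] (μ : Measure Ω) [IsFiniteMeasure μ]
    (hq : ∀ i, MeasurableSet {ω | q i ω}) (w : ι → ℝ) :
    ∫ ω, ∑ i ∈ univ.filter (fun i => q i ω), w i ∂μ = ∑ i, μ.real {ω | q i ω} * w i := by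
  simp_rw [sum_filter_eq_sum_indicator_setOf]
  rw [integral_finsetSum _ fun i _ => (integrable_const (w i)).indicator (hq i)]
  exact sum_congr rfl fun i _ => by rw [integral_indicator_const _ (hq i), smul_eq_mul]

end

lemma sum_mul_le_mul_sum_add_sum_filter_not_mem {ι : Type*} [Fintype ι] [DecidableEq ι]
    (G : Finset ι) {p w : ι → ℝ} {a : ℝ} (ha : 0 ≤ a) (hw : ∀ i, 0 ≤ w i) (hp : ∀ i, p i ≤ 1)
    (hpG : ∀ i ∈ G, p i ≤ a) :
    ∑ i, p i * w i ≤ a * ∑ i, w i + ∑ i ∈ univ.filter (fun i => i ∉ G), w i := by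
  rw [← sum_filter_add_sum_filter_not univ (· ∈ G)]
  refine add_le_add ?_ (sum_le_sum fun i _ => mul_le_of_le_one_left (hw i) (hp i))
  calc ∑ i ∈ univ.filter (· ∈ G), p i * w i
      ≤ ∑ i ∈ univ.filter (· ∈ G), a * w i :=
        sum_le_sum fun i hi => mul_le_mul_of_nonneg_right (hpG i (mem_filter.mp hi).2) (hw i)
    _ ≤ a * ∑ i, w i := by
        rw [← mul_sum]
        exact mul_le_mul_of_nonneg_left
          (sum_le_sum_of_subset_of_nonneg (filter_subset _ _) fun i _ _ => hw i) ha

theorem expected_weight_growth_general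
    {Ω : Type*} [MeasurableSpace Ω] (P : Measure Ω) [IsProbabilityMeasure P]
    (k : ℕ)
    (w : Fin k → ℝ) (hw : ∀ i, 0 ≤ w i)
    (G : Finset (Fin k))
    (Z : Ω → Finset (Fin k))
    (hZmeas : ∀ i, MeasurableSet {ω | i ∈ Z ω})
    (hG : ∑ i ∈ Finset.univ.filter (fun i => i ∉ G), w i ≤ (1 / 10) * ∑ i, w i)
    (hmiss : ∀ i ∈ G, P {ω | i ∉ Z ω} ≤ 1 / 100) :
    ∫ ω, ((∑ i, w i) + ∑ i ∈ Finset.univ.filter (fun i => i ∉ Z ω), w i) ∂P ≤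
      1.11 * ∑ i, w i := by
  have hmiss_real : ∀ i ∈ G, P.real {ω | i ∉ Z ω} ≤ 1 / 100 := fun i hi =>
    (ENNReal.toReal_mono (by norm_num) (hmiss i hi)).trans_eq (by norm_num)
  have hexpected_missed :
      ∑ i, P.real {ω | i ∉ Z ω} * w i ≤ 1 / 100 * ∑ i, w i + 1 / 10 * ∑ i, w i :=
    (sum_mul_le_mul_sum_add_sum_filter_not_mem G (by norm_num) hw (fun _ => measureReal_le_one)
      hmiss_real).trans (by gcongr)
  have hmeas_missed i : MeasurableSet {ω | i ∉ Z ω} := (hZmeas i).compl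
  rw [integral_add (integrable_const _) (integrable_sum_filter P hmeas_missed w),
    integral_sum_filter P hmeas_missed w, integral_const, probReal_univ, one_smul]
  linarith

/-- Expected one-round total-weight growth bound in Algorithm MWeights: if the
players outside `G` carry at most one tenth of the total weight, and each player
in `G` is missed by the random set `Z` with probability at most `1/100`, then the
expected new total weight `∑ᵢ wᵢ + ∑_{i ∉ Z} wᵢ` is at most `1.11` times the old
total weight. -/
theorem expected_weight_growth
    {Ω : Type*} [MeasurableSpace Ω] (P : Measure Ω) [IsProbabilityMeasure P]
    (k : ℕ) (hk : 1 ≤ k)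
    (w : Fin k → ℝ) (hw : ∀ i, 0 ≤ w i)
    (G : Finset (Fin k))
    (Z : Ω → Finset (Fin k))
    (hZmeas : ∀ i, MeasurableSet {ω | i ∈ Z ω})
    (hG : ∑ i ∈ Finset.univ.filter (fun i => i ∉ G), w i ≤ (1 / 10) * ∑ i, w i)
    (hmiss : ∀ i ∈ G, P {ω | i ∉ Z ω} ≤ 1 / 100) :
    ∫ ω, ((∑ i, w i) + ∑ i ∈ Finset.univ.filter (fun i => i ∉ Z ω), w i) ∂P ≤
      1.11 * ∑ i, w i :=
  expected_weight_growth_general P k w hw G Z hZmeas hG hmiss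
end

section
/- Let k ≥ 2 be an integer, ε ∈ (0,1), δ ∈ (0,1), and let T̃ be an integer with T̃ ≥ 2000·ln(k/δ). For each round t ∈ {0,...,T̃−1}, let e^{(t)} : {1,...,k} → [0,1] and Z^{(t)} ⊆ {1,...,k}, and define weights by w(0,i) = 1, w(t+1,i) = w(t,i) if i ∈ Z^{(t)} and w(t+1,i) = 2·w(t,i) otherwise. Fix a player i, and assume: (a) the number of rounds t with e^{(t)}(i) > ε/4 and i ∈ Z^{(t)} is at most 0.05·T̃, and (b) ∑_{j=1}^k w(T̃,j) ≤ 1.18^{T̃} · k. Then the number of rounds t ∈ {0,...,T̃−1} with e^{(t)}(i) ≤ ε/4 is strictly greater than 0.7·T̃. -/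
open scoped Classical

/-- Deterministic per-player core of the analysis of Algorithm MWeights: if
player `i` suffers at most `5%` failed rounds (rounds with error above `ε/4`
erroneously accepted by the test) and the final total weight is at most
`1.18^{T̃}·k`, then player `i` has error at most `ε/4` in strictly more than
70% of the rounds. -/
theorem mweights_core
    (k : ℕ) (hk : 2 ≤ k) (ε δ : ℝ)
    (hε : ε ∈ Set.Ioo (0 : ℝ) 1) (hδ : δ ∈ Set.Ioo (0 : ℝ) 1)
    (T : ℕ) (hT : 2000 * Real.log (k / δ) ≤ T)
    (e : ℕ → Fin k → ℝ) (he : ∀ t < T, ∀ i, e t i ∈ Set.Icc (0 : ℝ) 1)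
    (Z : ℕ → Finset (Fin k))
    (w : ℕ → Fin k → ℝ)
    (hw0 : ∀ i, w 0 i = 1)
    (hwstep : ∀ t i, w (t + 1) i = if i ∈ Z t then w t i else 2 * w t i)
    (i : Fin k)
    (hfail : (((Finset.range T).filter (fun t => ε / 4 < e t i ∧ i ∈ Z t)).card : ℝ) ≤
      (0.05 : ℝ) * T)
    (htotal : ∑ j, w T j ≤ (1.18 : ℝ) ^ T * k) :
    (0.7 : ℝ) * T < (((Finset.range T).filter (fun t => e t i ≤ ε / 4)).card : ℝ) := by
  have hk0 : (0:ℝ) < k := by positivity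
  have hkR : (2:ℝ) ≤ k := by exact_mod_cast hk
  -- T > 0
  have hkδ : (1:ℝ) < k / δ := by
    rw [lt_div_iff₀ hδ.1]; nlinarith [hδ.2]
  have hT0 : (0:ℝ) < T := by
    have := Real.log_pos hkδ
    nlinarith
  -- log k ≤ T / 2000
  have hlogk : Real.log k ≤ (T:ℝ) / 2000 := by
    have h1 : (k:ℝ) ≤ k / δ := by
      rw [le_div_iff₀ hδ.1]; nlinarith [hδ.2]
    have h2 : Real.log k ≤ Real.log (k / δ) := Real.log_le_log hk0 h1
    linarith
  -- weights are positive
  have hwpos : ∀ t j, (0:ℝ) < w t j := by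
    intro t
    induction t with
    | zero => intro j; rw [hw0]; norm_num
    | succ n ih =>
      intro j
      rw [hwstep]
      split
      · exact ih j
      · nlinarith [ih j]
  -- w T i = 2 ^ (number of rounds where i ∉ Z t)
  have hwi : ∀ n, w n i = (2:ℝ) ^ ((Finset.range n).filter (fun t => i ∉ Z t)).card := by
    intro n
    induction n with
    | zero => simp [hw0]
    | succ n ih =>
      rw [hwstep, Finset.range_add_one, Finset.filter_insert]
      by_cases h : i ∈ Z n
      · simp [h, ih]
      · simp only [h, if_neg, not_false_iff, if_true]
        rw [Finset.card_insert_of_notMem (by simp), pow_succ, ih]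
        ring
  set C := (Finset.range T).filter (fun t => i ∉ Z t) with hC
  set B := (Finset.range T).filter (fun t => ε / 4 < e t i ∧ i ∈ Z t) with hB
  set A := (Finset.range T).filter (fun t => e t i ≤ ε / 4) with hA
  -- 2^|C| ≤ 1.18^T * k
  have hsingle : w T i ≤ ∑ j, w T j := by
    have := Finset.single_le_sum (f := fun j => w T j)
      (fun j _ => le_of_lt (hwpos T j)) (Finset.mem_univ i)
    simpa using this
  have hpow : (2:ℝ) ^ C.card ≤ (1.18:ℝ) ^ T * k := by
    calc (2:ℝ) ^ C.card = w T i := (hwi T).symm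
    _ ≤ ∑ j, w T j := hsingle
    _ ≤ (1.18:ℝ) ^ T * k := htotal
  -- key numeric: log 1.18 ≤ 0.25 * log 2 - 0.001
  have hnum : Real.log 1.18 ≤ 0.25 * Real.log 2 - 0.001 := by
    have hexp : (0.992:ℝ) ≤ Real.exp (-0.008) := by
      have := Real.add_one_le_exp (-0.008 : ℝ)
      linarith
    have h18 : (1.18:ℝ) ^ 8 ≤ 4 * Real.exp (-0.008) := by nlinarith
    have hlog := Real.log_le_log (by positivity) h18
    rw [Real.log_pow, Real.log_mul (by norm_num) (Real.exp_ne_zero _),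
      Real.log_exp, show (4:ℝ) = 2^2 by norm_num, Real.log_pow] at hlog
    push_cast at hlog
    linarith
  -- take logs: |C| * log 2 ≤ T * log 1.18 + log k
  have hlogpow := Real.log_le_log (by positivity) hpow
  rw [Real.log_pow, Real.log_mul (by positivity) (ne_of_gt hk0), Real.log_pow] at hlogpow
  -- |C| < 0.25 T
  have hlog2 : (0:ℝ) < Real.log 2 := Real.log_pos (by norm_num)
  have hCcard : (C.card : ℝ) < 0.25 * T := by
    have h1 : (C.card : ℝ) * Real.log 2 ≤ (T:ℝ) * (0.25 * Real.log 2 - 0.001) + (T:ℝ)/2000 := by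
      nlinarith [hT0]
    have h2 : (C.card : ℝ) * Real.log 2 < 0.25 * T * Real.log 2 := by nlinarith
    exact lt_of_mul_lt_mul_right (by nlinarith) (le_of_lt hlog2)
  -- covering: range T ⊆ A ∪ B ∪ C
  have hcover : (T:ℝ) ≤ (A.card : ℝ) + B.card + C.card := by
    have hsub : Finset.range T ⊆ A ∪ (B ∪ C) := by
      intro t ht
      simp only [hA, hB, hC, Finset.mem_union, Finset.mem_filter]
      by_cases h1 : e t i ≤ ε / 4
      · exact Or.inl ⟨ht, h1⟩
      · by_cases h2 : i ∈ Z t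
        · exact Or.inr (Or.inl ⟨ht, lt_of_not_ge h1, h2⟩)
        · exact Or.inr (Or.inr ⟨ht, h2⟩)
    have := Finset.card_le_card hsub
    have h2 := Finset.card_union_le A (B ∪ C)
    have h3 := Finset.card_union_le B C
    have : T ≤ A.card + (B.card + C.card) := by
      calc T = (Finset.range T).card := (Finset.card_range T).symm
      _ ≤ (A ∪ (B ∪ C)).card := Finset.card_le_card hsub
      _ ≤ A.card + (B ∪ C).card := h2
      _ ≤ A.card + (B.card + C.card) := by omega
    have h4 : T ≤ A.card + B.card + C.card := by omega
    exact_mod_cast h4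
  norm_num at hfail hCcard hcover ⊢
  linarith
end

section
/- Let X and Y be measurable spaces, let k ≥ 2 be an integer, ε ∈ (0,1), and T = ⌈10·ln k⌉. Let D_1,...,D_k be probability measures on X × Y. For each round t ∈ {0,...,T−1}, let g^{(t)} : X → Y be a function whose disagreement set {(x,y) : g^{(t)}(x) ≠ y} is measurable, write e^{(t)}(i) = err_{D_i}(g^{(t)}), and let Z^{(t)} ⊆ {1,...,k} satisfy {i : e^{(t)}(i) ≤ ε/12} ⊆ Z^{(t)} ⊆ {i : e^{(t)}(i) ≤ ε/4}. Define weights by w(0,i) = 1, w(t+1,i) = w(t,i) if i ∈ Z^{(t)} and w(t+1,i) = 2·w(t,i) otherwise, and assume for every round t that ∑_{i=1}^k (w(t,i)/∑_j w(t,j)) · e^{(t)}(i) ≤ ε/120. Let g : X → Y be a function with measurable disagreement set satisfying the plurality property with respect to g^{(0)},...,g^{(T−1)}: for all x ∈ X, y ∈ Y with g(x) ≠ y, at least T/2 of the indices t satisfy g^{(t)}(x) ≠ y. Then err_{D_i}(g) ≤ ε for every i ∈ {1,...,k}. -/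
open MeasureTheory
open scoped Classical

/-- Correctness of Algorithm BasicMW conditioned on all calls succeeding: with
`T = ⌈10 ln k⌉` rounds, successful tests, small weighted-average error in each
round, and `g` a plurality vote of the round hypotheses, the error of `g` on
every player's distribution is at most `ε`. -/
theorem basicMW_correct
    {X Y : Type*} [MeasurableSpace X] [MeasurableSpace Y]
    (k : ℕ) (hk : 2 ≤ k) (ε : ℝ) (hε : ε ∈ Set.Ioo (0 : ℝ) 1)
    (T : ℕ) (hT : T = ⌈10 * Real.log k⌉₊)
    (D : Fin k → Measure (X × Y)) [∀ i, IsProbabilityMeasure (D i)]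
    (gs : ℕ → X → Y)
    (hgs : ∀ t < T, MeasurableSet {p : X × Y | gs t p.1 ≠ p.2})
    (Z : ℕ → Finset (Fin k))
    (hZ₁ : ∀ t < T, ∀ i,
      (D i {p : X × Y | gs t p.1 ≠ p.2}).toReal ≤ ε / 12 → i ∈ Z t)
    (hZ₂ : ∀ t < T, ∀ i ∈ Z t,
      (D i {p : X × Y | gs t p.1 ≠ p.2}).toReal ≤ ε / 4)
    (w : ℕ → Fin k → ℝ)
    (hw0 : ∀ i, w 0 i = 1)
    (hwstep : ∀ t i, w (t + 1) i = if i ∈ Z t then w t i else 2 * w t i)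
    (havg : ∀ t < T,
      ∑ i, (w t i / ∑ j, w t j) * (D i {p : X × Y | gs t p.1 ≠ p.2}).toReal ≤ ε / 120)
    (g : X → Y)
    (hg : MeasurableSet {p : X × Y | g p.1 ≠ p.2})
    (hplur : ∀ x y, g x ≠ y →
      (T : ℝ) / 2 ≤ (((Finset.range T).filter (fun t => gs t x ≠ y)).card : ℝ)) :
    ∀ i : Fin k, (D i {p : X × Y | g p.1 ≠ p.2}).toReal ≤ ε := by
  obtain ⟨hε0, hε1⟩ := hε
  have hk2 : (2:ℝ) ≤ (k:ℝ) := by exact_mod_cast hk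
  have hlog2 : (0.6931471803 : ℝ) < Real.log 2 := Real.log_two_gt_d9
  have hlogk : Real.log k ≤ (T:ℝ) / 10 := by
    have h1 : 10 * Real.log k ≤ (T:ℝ) := by
      rw [hT]; exact Nat.le_ceil _
    linarith
  have hlogkpos : 0 < Real.log k :=
    Real.log_pos (by linarith)
  have hT1 : 1 ≤ T := by
    rw [hT]
    exact Nat.one_le_ceil_iff.mpr (by positivity)
  -- the exact formula for the weights
  have hwpow : ∀ (i : Fin k) (t : ℕ),
      w t i = 2 ^ (((Finset.range t).filter (fun s => i ∉ Z s)).card) := by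
    intro i t
    induction t with
    | zero => simp [hw0]
    | succ t ih =>
      rw [hwstep]
      by_cases h : i ∈ Z t
      · rw [if_pos h, Finset.range_add_one, Finset.filter_insert, if_neg (by simp [h]), ih]
      · rw [if_neg h, Finset.range_add_one, Finset.filter_insert, if_pos (by simp [h]),
          Finset.card_insert_of_notMem (by simp), ih, pow_succ]
        ring
  have hwpos : ∀ t (i : Fin k), 0 < w t i := by
    intro t i; rw [hwpow]; positivity
  -- total weight grows by at most a factor 11/10 each round
  have hS : ∀ t < T, ∑ i, w (t+1) i ≤ (11/10) * ∑ i, w t i := by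
    intro t ht
    have : Nonempty (Fin k) := ⟨⟨0, by omega⟩⟩
    have hSpos : 0 < ∑ j, w t j :=
      Finset.sum_pos (fun j _ => hwpos t j) Finset.univ_nonempty
    set e : Fin k → ℝ := fun i => (D i {p : X × Y | gs t p.1 ≠ p.2}).toReal with he
    have hkey : ∀ i : Fin k, w (t+1) i ≤ w t i + (12/ε) * (w t i * e i) := by
      intro i
      rw [hwstep]
      by_cases h : i ∈ Z t
      · rw [if_pos h]
        have h0 : 0 ≤ e i := ENNReal.toReal_nonneg
        have h1 : 0 ≤ 12/ε * (w t i * e i) :=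
          mul_nonneg (by positivity) (mul_nonneg (hwpos t i).le h0)
        linarith
      · rw [if_neg h]
        have hei : ε / 12 < e i := by
          by_contra hc
          exact h (hZ₁ t ht i (le_of_not_gt hc))
        have h1 : w t i ≤ 12/ε * (w t i * e i) := by
          rw [div_mul_eq_mul_div, le_div_iff₀ hε0]
          nlinarith [hwpos t i]
        linarith
    have hsum : ∑ i, w t i * e i ≤ (ε/120) * ∑ j, w t j := by
      have h1 := havg t ht
      have h2 : ∑ i, (w t i / ∑ j, w t j) * e i
          = (∑ i, w t i * e i) / ∑ j, w t j := by
        rw [Finset.sum_div]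
        exact Finset.sum_congr rfl (fun i _ => by ring)
      rw [h2, div_le_iff₀ hSpos] at h1
      linarith
    calc ∑ i, w (t+1) i ≤ ∑ i, (w t i + (12/ε) * (w t i * e i)) :=
          Finset.sum_le_sum (fun i _ => hkey i)
      _ = (∑ i, w t i) + (12/ε) * ∑ i, w t i * e i := by
          rw [Finset.sum_add_distrib, Finset.mul_sum]
      _ ≤ (∑ i, w t i) + (12/ε) * ((ε/120) * ∑ j, w t j) := by
          have : 0 < 12/ε := by positivity
          nlinarith [hsum]
      _ = (11/10) * ∑ i, w t i := by field_simp; ring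
  have hStotal : ∀ t ≤ T, ∑ i, w t i ≤ (k:ℝ) * (11/10) ^ t := by
    intro t
    induction t with
    | zero => intro _; simp [hw0]
    | succ t ih =>
      intro ht
      have ht' : t < T := ht
      calc ∑ i, w (t+1) i ≤ (11/10) * ∑ i, w t i := hS t ht'
        _ ≤ (11/10) * ((k:ℝ) * (11/10) ^ t) := by
            have := ih (le_of_lt ht')
            nlinarith
        _ = (k:ℝ) * (11/10) ^ (t+1) := by ring
  intro i
  set B : ℕ := ((Finset.range T).filter (fun s => i ∉ Z s)).card with hB
  -- bound on the number of "bad" rounds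
  have h3B : 3 * B ≤ T := by
    have h1 : (2:ℝ) ^ B ≤ (k:ℝ) * (11/10) ^ T := by
      calc (2:ℝ) ^ B = w T i := (hwpow i T).symm
        _ ≤ ∑ j, w T j :=
            Finset.single_le_sum (fun j _ => le_of_lt (hwpos T j)) (Finset.mem_univ i)
        _ ≤ (k:ℝ) * (11/10) ^ T := hStotal T le_rfl
    have h2 : (B:ℝ) * Real.log 2 ≤ Real.log k + (T:ℝ) * Real.log (11/10) := by
      have hl := Real.log_le_log (by positivity) h1
      rwa [Real.log_pow, Real.log_mul (by positivity) (by positivity),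
        Real.log_pow] at hl
    have h3 : Real.log (11/10 : ℝ) ≤ 1/10 := by
      have := Real.log_le_sub_one_of_pos (x := (11/10:ℝ)) (by norm_num)
      linarith
    have h4 : (B:ℝ) * Real.log 2 ≤ (T:ℝ) / 5 := by
      have : (T:ℝ) * Real.log (11/10) ≤ (T:ℝ) / 10 := by
        have hTnn : (0:ℝ) ≤ T := Nat.cast_nonneg T
        nlinarith
      linarith
    have h5 : (3 * B : ℝ) ≤ (T:ℝ) := by
      nlinarith [Nat.cast_nonneg (α := ℝ) B, Nat.cast_nonneg (α := ℝ) T]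
    exact_mod_cast h5
  -- the measure-theoretic (Markov) step
  set A : Set (X × Y) := {p : X × Y | g p.1 ≠ p.2} with hA
  set At : ℕ → Set (X × Y) := fun t => {p : X × Y | gs t p.1 ≠ p.2} with hAt
  set G : Finset ℕ := (Finset.range T).filter (fun t => i ∈ Z t) with hG
  set m : ℕ := T - 2 * B with hm
  have hGcard : G.card = T - B := by
    have h : G.card + ((Finset.range T).filter (fun s => i ∉ Z s)).card
        = (Finset.range T).card :=
      Finset.card_filter_add_card_filter_not (p := fun t => i ∈ Z t)
    rw [Finset.card_range] at h
    omega
  have hBle : B ≤ T := by omega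
  -- pointwise counting bound
  have hpoint : ∀ p : X × Y,
      (m : ENNReal) * A.indicator 1 p ≤ ∑ t ∈ G, (2 : ENNReal) * (At t).indicator 1 p := by
    intro p
    by_cases hp : p ∈ A
    · have hhits := hplur p.1 p.2 hp
      set Hall : ℕ := ((Finset.range T).filter (fun t => gs t p.1 ≠ p.2)).card with hHall
      have h2all : T ≤ 2 * Hall := by
        have : (T:ℝ) ≤ 2 * (Hall:ℝ) := by linarith
        exact_mod_cast this
      set Hgood : ℕ := (G.filter (fun t => p ∈ At t)).card with hHgood
      have hsplit : Hall ≤ Hgood + B := by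
        have hsub : (Finset.range T).filter (fun t => gs t p.1 ≠ p.2) ⊆
            (G.filter (fun t => p ∈ At t)) ∪ ((Finset.range T).filter (fun s => i ∉ Z s)) := by
          intro t ht
          simp only [Finset.mem_filter, Finset.mem_range] at ht
          by_cases hz : i ∈ Z t
          · refine Finset.mem_union_left _ ?_
            simp only [hG, Finset.mem_filter, Finset.mem_range]
            exact ⟨⟨ht.1, hz⟩, ht.2⟩
          · exact Finset.mem_union_right _ (by
              simp only [Finset.mem_filter, Finset.mem_range]; exact ⟨ht.1, hz⟩)
        calc Hall ≤ ((G.filter (fun t => p ∈ At t)) ∪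
              ((Finset.range T).filter (fun s => i ∉ Z s))).card :=
            Finset.card_le_card hsub
          _ ≤ Hgood + B := Finset.card_union_le _ _
      have hmle : m ≤ 2 * Hgood := by omega
      have hrhs : ∑ t ∈ G, (2 : ENNReal) * (At t).indicator 1 p
          = 2 * (Hgood : ENNReal) := by
        rw [hHgood, ← Finset.mul_sum]
        congr 1
        rw [Finset.card_filter, Nat.cast_sum]
        refine Finset.sum_congr rfl (fun t _ => ?_)
        by_cases hpt : p ∈ At t <;> simp [Set.indicator, hpt]
      rw [hrhs, Set.indicator_of_mem hp, Pi.one_apply, mul_one]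
      calc (m : ENNReal) ≤ ((2 * Hgood : ℕ) : ENNReal) := by exact_mod_cast hmle
        _ = 2 * (Hgood : ENNReal) := by push_cast; ring
    · rw [Set.indicator_of_notMem hp, mul_zero]
      positivity
  have hmarkov : (m : ENNReal) * D i A ≤ ∑ t ∈ G, 2 * D i (At t) := by
    have hmeasG : ∀ t ∈ G, MeasurableSet (At t) := by
      intro t ht
      simp only [hG, Finset.mem_filter, Finset.mem_range] at ht
      exact hgs t ht.1
    calc (m : ENNReal) * D i A
        = ∫⁻ p, (m : ENNReal) * A.indicator 1 p ∂(D i) := by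
          rw [lintegral_const_mul _ ((measurable_one (α := ENNReal) (β := X × Y)).indicator hg),
            lintegral_indicator_one hg]
      _ ≤ ∫⁻ p, ∑ t ∈ G, (2 : ENNReal) * (At t).indicator 1 p ∂(D i) :=
          lintegral_mono hpoint
      _ = ∑ t ∈ G, ∫⁻ p, (2 : ENNReal) * (At t).indicator 1 p ∂(D i) :=
          lintegral_finset_sum G (fun t ht =>
            ((measurable_one (α := ENNReal) (β := X × Y)).indicator (hmeasG t ht)).const_mul 2)
      _ = ∑ t ∈ G, 2 * D i (At t) := by
          refine Finset.sum_congr rfl (fun t ht => ?_)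
          rw [lintegral_const_mul _ ((measurable_one (α := ENNReal) (β := X × Y)).indicator (hmeasG t ht)),
            lintegral_indicator_one (hmeasG t ht)]
  -- convert to real numbers
  have hfin : ∀ t, D i (At t) ≠ ⊤ := fun t => measure_ne_top _ _
  have hmarkovR : (m : ℝ) * (D i A).toReal ≤ ∑ t ∈ G, 2 * (D i (At t)).toReal := by
    have hne : (∑ t ∈ G, 2 * D i (At t)) ≠ ⊤ := by
      refine (ENNReal.sum_lt_top.mpr (fun t _ => ?_)).ne
      exact ENNReal.mul_lt_top (by norm_num) (measure_lt_top _ _)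
    have := ENNReal.toReal_mono hne hmarkov
    rw [ENNReal.toReal_mul, ENNReal.toReal_sum (fun t _ =>
      (ENNReal.mul_lt_top (by norm_num) (measure_lt_top _ _)).ne)] at this
    rw [ENNReal.toReal_natCast] at this
    refine le_trans this (le_of_eq ?_)
    refine Finset.sum_congr rfl (fun t _ => ?_)
    rw [ENNReal.toReal_mul, ENNReal.toReal_ofNat]
  have hGsum : ∑ t ∈ G, 2 * (D i (At t)).toReal ≤ ((T - B : ℕ) : ℝ) * (ε / 2) := by
    calc ∑ t ∈ G, 2 * (D i (At t)).toReal ≤ ∑ t ∈ G, (ε / 2) := by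
          refine Finset.sum_le_sum (fun t ht => ?_)
          simp only [hG, Finset.mem_filter, Finset.mem_range] at ht
          have := hZ₂ t ht.1 i ht.2
          linarith
      _ = ((T - B : ℕ) : ℝ) * (ε / 2) := by
          rw [Finset.sum_const, hGcard, nsmul_eq_mul]
  -- put it all together
  have hmval : (m : ℝ) = (T:ℝ) - 2 * B := by
    have : (2:ℕ) * B ≤ T := by omega
    rw [hm]; push_cast [Nat.cast_sub this]; ring
  have hTBval : ((T - B : ℕ) : ℝ) = (T:ℝ) - B := by
    push_cast [Nat.cast_sub hBle]; ring
  have hmpos : (0:ℝ) < m := by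
    have : 1 ≤ m := by omega
    exact_mod_cast Nat.lt_of_lt_of_le Nat.zero_lt_one this
  have h3BR : 3 * (B:ℝ) ≤ (T:ℝ) := by exact_mod_cast h3B
  have hfinal : (m : ℝ) * (D i A).toReal ≤ (m : ℝ) * ε := by
    calc (m : ℝ) * (D i A).toReal ≤ ((T - B : ℕ) : ℝ) * (ε / 2) :=
          le_trans hmarkovR hGsum
      _ ≤ (m : ℝ) * ε := by rw [hTBval, hmval]; nlinarith
  exact le_of_mul_le_mul_left hfinal hmpos
end

section
/- Let X and Y be measurable spaces, let k ≥ 2 be an integer, ε ∈ (0,1), δ ∈ (0,1), and let T̃ be an integer with T̃ ≥ 2000·ln(k/δ). Let D_1,...,D_k be probability measures on X × Y. For each round t ∈ {0,...,T̃−1}, let g^{(t)} : X → Y be a function whose disagreement set is measurable, write e^{(t)}(i) = err_{D_i}(g^{(t)}), and let Z^{(t)} ⊆ {1,...,k}. Define weights by w(0,i) = 1, w(t+1,i) = w(t,i) if i ∈ Z^{(t)} and w(t+1,i) = 2·w(t,i) otherwise. Assume: (a) for every player i, the number of rounds t with e^{(t)}(i) > ε/4 and i ∈ Z^{(t)} is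 at most 0.05·T̃; (b) ∑_{j=1}^k w(T̃,j) ≤ 1.18^{T̃}·k. Let g : X → Y be a function with measurable disagreement set satisfying the plurality property with respect to g^{(0)},...,g^{(T̃−1)}: for all x ∈ X, y ∈ Y with g(x) ≠ y, at least T̃/2 of the indices t satisfy g^{(t)}(x) ≠ y. Then err_{D_i}(g) ≤ ε for every i ∈ {1,...,k}. -/
open MeasureTheory
open scoped Classical

lemma mw_weight_formula {k : ℕ} (Z : ℕ → Finset (Fin k)) (w : ℕ → Fin k → ℝ)
    (hw0 : ∀ i, w 0 i = 1)
    (hwstep : ∀ t i, w (t + 1) i = if i ∈ Z t then w t i else 2 * w t i)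
    (i : Fin k) : ∀ T : ℕ, w T i = 2 ^ (((Finset.range T).filter (fun t => i ∉ Z t)).card) := by
  intro T
  induction T with
  | zero => simp [hw0]
  | succ n ih =>
    rw [hwstep, Finset.range_add_one, Finset.filter_insert]
    by_cases h : i ∈ Z n
    · simp [h, ih]
    · have hn : n ∉ (Finset.range n).filter (fun t => i ∉ Z t) := by simp
      simp [h, ih, Finset.card_insert_of_notMem hn, pow_succ]
      ring

/-- Correctness of Algorithm MWeights conditioned on the good event: with
`T̃ ≥ 2000·ln(k/δ)` rounds, at most `5%` failed test rounds per player, the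
final total weight at most `1.18^{T̃}·k`, and `g` a plurality vote of the round
hypotheses, the error of `g` on every player's distribution is at most `ε`. -/
theorem mweights_correct
    {X Y : Type*} [MeasurableSpace X] [MeasurableSpace Y]
    (k : ℕ) (hk : 2 ≤ k) (ε δ : ℝ)
    (hε : ε ∈ Set.Ioo (0 : ℝ) 1) (hδ : δ ∈ Set.Ioo (0 : ℝ) 1)
    (T : ℕ) (hT : 2000 * Real.log ((k : ℝ) / δ) ≤ T)
    (D : Fin k → Measure (X × Y)) [∀ i, IsProbabilityMeasure (D i)]
    (gs : ℕ → X → Y)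
    (hgs : ∀ t < T, MeasurableSet {p : X × Y | gs t p.1 ≠ p.2})
    (Z : ℕ → Finset (Fin k))
    (w : ℕ → Fin k → ℝ)
    (hw0 : ∀ i, w 0 i = 1)
    (hwstep : ∀ t i, w (t + 1) i = if i ∈ Z t then w t i else 2 * w t i)
    (hfail : ∀ i : Fin k,
      (((Finset.range T).filter
        (fun t => ε / 4 < (D i {p : X × Y | gs t p.1 ≠ p.2}).toReal ∧ i ∈ Z t)).card : ℝ) ≤
        (0.05 : ℝ) * T)
    (htotal : ∑ j, w T j ≤ (1.18 : ℝ) ^ T * k)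
    (g : X → Y)
    (hg : MeasurableSet {p : X × Y | g p.1 ≠ p.2})
    (hplur : ∀ x y, g x ≠ y →
      (T : ℝ) / 2 ≤ (((Finset.range T).filter (fun t => gs t x ≠ y)).card : ℝ)) :
    ∀ i : Fin k, (D i {p : X × Y | g p.1 ≠ p.2}).toReal ≤ ε := by
  intro i
  have hδ0 := hδ.1
  have hδ1 := hδ.2
  have hε0 := hε.1
  have hk0 : (0:ℝ) < k := by positivity
  have hk2 : (2:ℝ) ≤ k := by exact_mod_cast hk
  -- T is positive
  have hkδ1 : (1:ℝ) < (k:ℝ) / δ := (one_lt_div hδ0).2 (by linarith)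
  have hlogpos := Real.log_pos hkδ1
  have hT0 : (0:ℝ) < T := by linarith
  -- bound on m = number of rounds with i ∉ Z t
  set m : ℕ := ((Finset.range T).filter (fun t => i ∉ Z t)).card with hm
  have hwT : w T i = 2 ^ m := mw_weight_formula Z w hw0 hwstep i T
  have hwnonneg : ∀ j, 0 ≤ w T j := fun j => by
    rw [mw_weight_formula Z w hw0 hwstep j T]; positivity
  have h2m : (2:ℝ) ^ m ≤ (1.18 : ℝ) ^ T * k := by
    calc (2:ℝ) ^ m = w T i := hwT.symm
    _ ≤ ∑ j, w T j := Finset.single_le_sum (fun j _ => hwnonneg j) (Finset.mem_univ i)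
    _ ≤ _ := htotal
  have hlogk : Real.log k ≤ (T:ℝ) / 2000 := by
    have h1 : Real.log ((k:ℝ)/δ) = Real.log k - Real.log δ := by
      rw [Real.log_div (by positivity) (ne_of_gt hδ0)]
    have h2 : Real.log δ < 0 := Real.log_neg hδ0 hδ1
    linarith
  have hlog118 : Real.log 1.18 ≤ 0.1726 := by
    have h1 : (1.18:ℝ) ≤ 1.0863 ^ 2 := by norm_num
    have h2 : Real.log 1.0863 ≤ 0.0863 := by
      have := Real.log_le_sub_one_of_pos (x := (1.0863:ℝ)) (by norm_num)
      linarith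
    calc Real.log 1.18 ≤ Real.log ((1.0863:ℝ)^2) := Real.log_le_log (by norm_num) h1
    _ = 2 * Real.log 1.0863 := by rw [Real.log_pow]; push_cast; ring
    _ ≤ 0.1726 := by linarith
  have hlog2 : (0.6931471:ℝ) ≤ Real.log 2 := le_of_lt (by
    have := Real.log_two_gt_d9; linarith)
  have hmT : (m:ℝ) ≤ 0.25 * T := by
    have hlog : (m:ℝ) * Real.log 2 ≤ (T:ℝ) * Real.log 1.18 + Real.log k := by
      have := Real.log_le_log (by positivity) h2m
      rw [Real.log_pow, Real.log_mul (by positivity) (ne_of_gt hk0), Real.log_pow] at this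
      linarith
    nlinarith [Nat.cast_nonneg (α := ℝ) m, hT0.le]
  -- measure-theoretic part
  set μ := D i with hμ
  set B : Set (X × Y) := {p : X × Y | g p.1 ≠ p.2} with hB
  set E : ℕ → Set (X × Y) := fun t => {p : X × Y | gs t p.1 ≠ p.2} with hE
  set p : ℝ := (μ B).toReal with hp
  have hEmeas : ∀ t ∈ Finset.range T, MeasurableSet (E t ∩ B) :=
    fun t ht => (hgs t (Finset.mem_range.mp ht)).inter hg
  -- pointwise plurality bound
  have hpoint : ∀ q : X × Y, B.indicator (fun _ => (T : ENNReal)) q ≤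
      2 * ∑ t ∈ Finset.range T, (E t ∩ B).indicator (fun _ => (1:ENNReal)) q := by
    intro q
    by_cases hq : q ∈ B
    · rw [Set.indicator_of_mem hq]
      have hsum : ∑ t ∈ Finset.range T, (E t ∩ B).indicator (fun _ => (1:ENNReal)) q =
          (((Finset.range T).filter (fun t => gs t q.1 ≠ q.2)).card : ENNReal) := by
        rw [Finset.card_filter]
        push_cast
        refine Finset.sum_congr rfl (fun t _ => ?_)
        by_cases h : gs t q.1 ≠ q.2
        · have hmem : q ∈ E t ∩ B := ⟨h, hq⟩
          rw [Set.indicator_of_mem hmem, if_pos h]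
        · rw [Set.indicator_of_notMem (fun hc => h hc.1), if_neg h]
      rw [hsum]
      have h1 : (T:ℝ) ≤ 2 * (((Finset.range T).filter (fun t => gs t q.1 ≠ q.2)).card : ℝ) := by
        have := hplur q.1 q.2 hq
        linarith
      have h2 : (T:ℕ) ≤ 2 * ((Finset.range T).filter (fun t => gs t q.1 ≠ q.2)).card := by
        exact_mod_cast h1
      exact_mod_cast (Nat.cast_le (α := ENNReal)).2 h2
    · simp [Set.indicator_of_notMem hq]
  have hkey : (T : ENNReal) * μ B ≤ 2 * ∑ t ∈ Finset.range T, μ (E t ∩ B) := by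
    calc (T : ENNReal) * μ B = ∫⁻ q, B.indicator (fun _ => (T : ENNReal)) q ∂μ := by
          rw [lintegral_indicator_const hg]
    _ ≤ ∫⁻ q, 2 * ∑ t ∈ Finset.range T, (E t ∩ B).indicator (fun _ => (1:ENNReal)) q ∂μ :=
          lintegral_mono hpoint
    _ = 2 * ∫⁻ q, ∑ t ∈ Finset.range T, (E t ∩ B).indicator (fun _ => (1:ENNReal)) q ∂μ := by
          rw [lintegral_const_mul' _ _ (by norm_num)]
    _ = 2 * ∑ t ∈ Finset.range T, ∫⁻ q, (E t ∩ B).indicator (fun _ => (1:ENNReal)) q ∂μ := by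
          congr 1
          exact lintegral_finset_sum (Finset.range T)
            (fun t ht => (measurable_one.indicator (hEmeas t ht)))
    _ = 2 * ∑ t ∈ Finset.range T, μ (E t ∩ B) := by
          congr 1
          exact Finset.sum_congr rfl (fun t ht => lintegral_indicator_one (hEmeas t ht))
  -- convert to real numbers
  have hfin : ∀ t, μ (E t ∩ B) ≠ ⊤ := fun t => measure_ne_top μ _
  have hkeyR : (T : ℝ) * p ≤ 2 * ∑ t ∈ Finset.range T, (μ (E t ∩ B)).toReal := by
    have hrhs : (2 * ∑ t ∈ Finset.range T, μ (E t ∩ B)) ≠ ⊤ := by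
      refine ENNReal.mul_ne_top (by norm_num) ?_
      exact (ENNReal.sum_lt_top.mpr (fun t _ => (hfin t).lt_top)).ne
    have := ENNReal.toReal_mono hrhs hkey
    rw [ENNReal.toReal_mul, ENNReal.toReal_mul, ENNReal.toReal_sum
      (fun t _ => hfin t)] at this
    simpa using this
  -- per-round bounds
  have hterm : ∀ t ∈ Finset.range T, (μ (E t ∩ B)).toReal ≤
      (if ε / 4 < (μ (E t)).toReal then p else ε / 4) := by
    intro t ht
    by_cases hc : ε / 4 < (μ (E t)).toReal
    · rw [if_pos hc]
      exact ENNReal.toReal_mono (measure_ne_top μ _) (measure_mono Set.inter_subset_right)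
    · rw [if_neg hc]
      push_neg at hc
      exact le_trans (ENNReal.toReal_mono (measure_ne_top μ _)
        (measure_mono Set.inter_subset_left)) hc
  set bad : Finset ℕ := (Finset.range T).filter (fun t => ε / 4 < (μ (E t)).toReal) with hbad
  have hsumle : ∑ t ∈ Finset.range T, (μ (E t ∩ B)).toReal ≤
      (bad.card : ℝ) * p + ((T : ℝ) - bad.card) * (ε / 4) := by
    have h1 : ∑ t ∈ Finset.range T, (μ (E t ∩ B)).toReal ≤
        ∑ t ∈ Finset.range T, (if ε / 4 < (μ (E t)).toReal then p else ε / 4) :=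
      Finset.sum_le_sum hterm
    rw [Finset.sum_ite, Finset.sum_const, Finset.sum_const] at h1
    have h2 := Finset.card_filter_add_card_filter_not
      (s := Finset.range T) (p := fun t => ε / 4 < (μ (E t)).toReal)
    simp only [Finset.card_range] at h2
    have h2' : (bad.card : ℝ) +
        (((Finset.range T).filter (fun t => ¬ (ε / 4 < (μ (E t)).toReal))).card : ℝ)
        = (T : ℝ) := by exact_mod_cast h2
    simp only [nsmul_eq_mul] at h1
    calc ∑ t ∈ Finset.range T, (μ (E t ∩ B)).toReal
        ≤ (bad.card : ℝ) * p +
          (((Finset.range T).filter (fun t => ¬ (ε / 4 < (μ (E t)).toReal))).card : ℝ)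
            * (ε / 4) := h1
    _ = (bad.card : ℝ) * p + ((T : ℝ) - bad.card) * (ε / 4) := by
          rw [show (((Finset.range T).filter
              (fun t => ¬ (ε / 4 < (μ (E t)).toReal))).card : ℝ) = (T : ℝ) - bad.card by
            linarith]
  -- bound on the number of bad rounds
  have hbadcard : (bad.card : ℝ) ≤ 0.3 * T := by
    have hsplit : bad.card = (bad.filter (fun t => i ∈ Z t)).card +
        (bad.filter (fun t => i ∉ Z t)).card :=
      (Finset.card_filter_add_card_filter_not (fun t => i ∈ Z t)).symm
    have h1 : ((bad.filter (fun t => i ∈ Z t)).card : ℝ) ≤ 0.05 * T := by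
      have : bad.filter (fun t => i ∈ Z t) = (Finset.range T).filter
          (fun t => ε / 4 < (D i {p : X × Y | gs t p.1 ≠ p.2}).toReal ∧ i ∈ Z t) := by
        rw [hbad, Finset.filter_filter]
      rw [this]
      exact hfail i
    have h2 : ((bad.filter (fun t => i ∉ Z t)).card : ℝ) ≤ (m : ℝ) := by
      have : bad.filter (fun t => i ∉ Z t) ⊆ (Finset.range T).filter (fun t => i ∉ Z t) := by
        intro t ht
        rw [Finset.mem_filter] at ht ⊢
        exact ⟨Finset.mem_filter.mp ht.1 |>.1, ht.2⟩
      exact_mod_cast Finset.card_le_card this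
    rw [hsplit]
    push_cast
    linarith
  -- final arithmetic
  have hpnonneg : 0 ≤ p := ENNReal.toReal_nonneg
  by_cases hcase : p ≤ ε / 4
  · linarith
  · push_neg at hcase
    nlinarith [mul_nonneg (sub_nonneg.2 hbadcard) (sub_nonneg.2 hcase.le),
      Nat.cast_nonneg (α := ℝ) bad.card]
end
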